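/- If a matrix-valued function σ on a domain Ω satisfies (1/K)|ξ|² ≤ ⟨σ(x)ξ, ξ⟩ ≤ K|ξ|² for all ξ and almost every x, and F: Ω → Ω is a K'-quasiconformal map (i.e., F ∈ W^{1,2}_loc with ‖DF(x)‖² ≤ K' · det DF(x)), then the pushforward conductivity F_*(σ)(y) = (J_F(x))^{-1} DF(x) σ(x) DF(x)^T, with x = F^{-1}(y), satisfies (1/(K K'))|ξ|² ≤ ⟨F_*(σ)(y)ξ, ξ⟩ ≤ K K'|ξ|² almost everywhere. -/
import Mathlib


open MeasureTheory Matrix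

noncomputable section

private lemma dp_self_nonneg (v : Fin 2 → ℝ) : 0 ≤ v ⬝ᵥ v := by
  simp [dotProduct, Fin.sum_univ_two]; nlinarith [sq_nonneg (v 0), sq_nonneg (v 1)]

private lemma dp_cs (v w : Fin 2 → ℝ) : (v ⬝ᵥ w) ^ 2 ≤ (v ⬝ᵥ v) * (w ⬝ᵥ w) := by
  have h := Finset.sum_mul_sq_le_sq_mul_sq Finset.univ v w
  simpa [dotProduct, sq] using h

/-- quadratic form identity -/
private lemma quad_eq (A S : Matrix (Fin 2) (Fin 2) ℝ) (r : ℝ) (ξ : Fin 2 → ℝ) :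
    ξ ⬝ᵥ (r • (A * S * Aᵀ)).mulVec ξ
      = r * (Aᵀ.mulVec ξ ⬝ᵥ S.mulVec (Aᵀ.mulVec ξ)) := by
  simp [Matrix.mulVec, dotProduct, Matrix.mul_apply, Fin.sum_univ_two,
    Matrix.transpose_apply, Matrix.smul_apply]
  ring

private lemma trans_dp (A : Matrix (Fin 2) (Fin 2) ℝ) (ξ : Fin 2 → ℝ) :
    Aᵀ.mulVec ξ ⬝ᵥ Aᵀ.mulVec ξ = ξ ⬝ᵥ A.mulVec (Aᵀ.mulVec ξ) := by
  simp [Matrix.mulVec, dotProduct, Fin.sum_univ_two, Matrix.transpose_apply]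
  ring

/-- if `|Aζ|² ≤ c|ζ|²` for all `ζ`, then the same for `Aᵀ`. -/
private lemma transpose_bound (A : Matrix (Fin 2) (Fin 2) ℝ) (c : ℝ)
    (h : ∀ ζ : Fin 2 → ℝ, A.mulVec ζ ⬝ᵥ A.mulVec ζ ≤ c * (ζ ⬝ᵥ ζ)) (ξ : Fin 2 → ℝ) :
    Aᵀ.mulVec ξ ⬝ᵥ Aᵀ.mulVec ξ ≤ c * (ξ ⬝ᵥ ξ) := by
  set η := Aᵀ.mulVec ξ with hη
  have ht0 : 0 ≤ η ⬝ᵥ η := dp_self_nonneg η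
  rcases eq_or_lt_of_le ht0 with h0 | h0
  · have hc : 0 ≤ c := by
      have := h ![1, 0]
      have h1 : (![1,0] : Fin 2 → ℝ) ⬝ᵥ ![1,0] = 1 := by
        simp [dotProduct, Fin.sum_univ_two]
      nlinarith [dp_self_nonneg (A.mulVec ![1,0])]
    nlinarith [dp_self_nonneg ξ]
  · have key : (η ⬝ᵥ η) ^ 2 ≤ (ξ ⬝ᵥ ξ) * (c * (η ⬝ᵥ η)) := by
      have h1 : η ⬝ᵥ η = ξ ⬝ᵥ A.mulVec η := trans_dp A ξ
      calc (η ⬝ᵥ η) ^ 2 = (ξ ⬝ᵥ A.mulVec η) ^ 2 := by rw [h1]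
        _ ≤ (ξ ⬝ᵥ ξ) * (A.mulVec η ⬝ᵥ A.mulVec η) := dp_cs _ _
        _ ≤ (ξ ⬝ᵥ ξ) * (c * (η ⬝ᵥ η)) := by
            exact mul_le_mul_of_nonneg_left (h η) (dp_self_nonneg ξ)
    nlinarith

/-- `(adj A)ᵀ` satisfies the same bound as `A` (2D rotation trick). -/
private lemma adj_bound (A : Matrix (Fin 2) (Fin 2) ℝ) (c : ℝ)
    (h : ∀ ζ : Fin 2 → ℝ, A.mulVec ζ ⬝ᵥ A.mulVec ζ ≤ c * (ζ ⬝ᵥ ζ)) (ζ : Fin 2 → ℝ) :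
    (A.adjugate)ᵀ.mulVec ζ ⬝ᵥ (A.adjugate)ᵀ.mulVec ζ ≤ c * (ζ ⬝ᵥ ζ) := by
  have h1 : (A.adjugate)ᵀ.mulVec ζ ⬝ᵥ (A.adjugate)ᵀ.mulVec ζ
      = A.mulVec ![ζ 1, -ζ 0] ⬝ᵥ A.mulVec ![ζ 1, -ζ 0] := by
    simp [Matrix.adjugate_fin_two, Matrix.mulVec, dotProduct, Fin.sum_univ_two,
      Matrix.transpose_apply]
    ring
  have h2 : (![ζ 1, -ζ 0] : Fin 2 → ℝ) ⬝ᵥ ![ζ 1, -ζ 0] = ζ ⬝ᵥ ζ := by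
    simp [dotProduct, Fin.sum_univ_two]; ring
  rw [h1, ← h2]
  exact h _

private lemma adj_mul_transpose (A : Matrix (Fin 2) (Fin 2) ℝ) (ξ : Fin 2 → ℝ) :
    (A.adjugate)ᵀ.mulVec (Aᵀ.mulVec ξ) = A.det • ξ := by
  rw [Matrix.mulVec_mulVec, ← Matrix.transpose_mul, Matrix.mul_adjugate,
    Matrix.transpose_smul, Matrix.transpose_one, Matrix.smul_mulVec, Matrix.one_mulVec]

/-- Ellipticity of the pushforward conductivity under a `K'`-quasiconformal map:
if `(1/K)|ξ|² ≤ ⟨σ(x)ξ, ξ⟩ ≤ K|ξ|²` a.e. and `‖DF(x)‖² ≤ K' · det DF(x)` a.e.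
(with `F ∈ W^{1,2}_loc`), then
`F_*(σ)(y) = (det DF(x))⁻¹ DF(x) σ(x) DF(x)ᵀ` (at `x = F⁻¹(y)`) satisfies
`(1/(KK'))|ξ|² ≤ ⟨F_*(σ)(y)ξ, ξ⟩ ≤ KK'|ξ|²` a.e. -/
theorem stmt0
    (Ω : Set (EuclideanSpace ℝ (Fin 2))) (hΩ : IsOpen Ω) (hb : Bornology.IsBounded Ω)
    (K K' : ℝ) (hK : 1 ≤ K) (hK' : 1 ≤ K')
    (σ : EuclideanSpace ℝ (Fin 2) → Matrix (Fin 2) (Fin 2) ℝ)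
    (hσ : ∀ᵐ x, x ∈ Ω → ∀ ξ : Fin 2 → ℝ,
      (1 / K) * (ξ ⬝ᵥ ξ) ≤ ξ ⬝ᵥ (σ x).mulVec ξ ∧ ξ ⬝ᵥ (σ x).mulVec ξ ≤ K * (ξ ⬝ᵥ ξ))
    (F : EuclideanSpace ℝ (Fin 2) → EuclideanSpace ℝ (Fin 2))
    (hFbij : Set.BijOn F Ω Ω)
    (DF : EuclideanSpace ℝ (Fin 2) → Matrix (Fin 2) (Fin 2) ℝ)
    (hFderiv : ∀ᵐ x, x ∈ Ω → HasFDerivAt F ((Matrix.toEuclideanCLM (𝕜 := ℝ) (DF x) :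
      EuclideanSpace ℝ (Fin 2) →L[ℝ] EuclideanSpace ℝ (Fin 2))) x)
    (hW12loc : LocallyIntegrableOn
      (fun x => ‖(Matrix.toEuclideanCLM (𝕜 := ℝ) (DF x) :
        EuclideanSpace ℝ (Fin 2) →L[ℝ] EuclideanSpace ℝ (Fin 2))‖ ^ 2) Ω)
    (hJ : ∀ᵐ x, x ∈ Ω → 0 < (DF x).det)
    (hqc : ∀ᵐ x, x ∈ Ω → ∀ ξ : Fin 2 → ℝ,
      (DF x).mulVec ξ ⬝ᵥ (DF x).mulVec ξ ≤ K' * (DF x).det * (ξ ⬝ᵥ ξ)) :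
    ∀ᵐ x, x ∈ Ω → ∀ ξ : Fin 2 → ℝ,
      (1 / (K * K')) * (ξ ⬝ᵥ ξ) ≤
          ξ ⬝ᵥ (((DF x).det)⁻¹ • (DF x * σ x * (DF x)ᵀ)).mulVec ξ ∧
        ξ ⬝ᵥ (((DF x).det)⁻¹ • (DF x * σ x * (DF x)ᵀ)).mulVec ξ ≤ (K * K') * (ξ ⬝ᵥ ξ) := by
  filter_upwards [hσ, hJ, hqc] with x h1 h2 h3
  intro hx ξ
  have hK0 : (0:ℝ) < K := lt_of_lt_of_le one_pos hK
  have hK'0 : (0:ℝ) < K' := lt_of_lt_of_le one_pos hK'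
  have hd : 0 < (DF x).det := h2 hx
  have hqcx : ∀ ζ : Fin 2 → ℝ, (DF x).mulVec ζ ⬝ᵥ (DF x).mulVec ζ
      ≤ (K' * (DF x).det) * (ζ ⬝ᵥ ζ) := fun ζ => h3 hx ζ
  simp only [quad_eq]
  set d := (DF x).det with hdd
  set η := (DF x)ᵀ.mulVec ξ with hηd
  set Q := η ⬝ᵥ (σ x).mulVec η with hQd
  have hξ0 := dp_self_nonneg ξ
  have hη0 := dp_self_nonneg η
  have hup : η ⬝ᵥ η ≤ (K' * d) * (ξ ⬝ᵥ ξ) := transpose_bound (DF x) _ hqcx ξ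
  have hlow : d * d * (ξ ⬝ᵥ ξ) ≤ (K' * d) * (η ⬝ᵥ η) := by
    have h4 := adj_bound (DF x) _ hqcx η
    rw [hηd, adj_mul_transpose] at h4
    have h6 : (d • ξ) ⬝ᵥ (d • ξ) = d * d * (ξ ⬝ᵥ ξ) := by
      simp [dotProduct, Fin.sum_univ_two, Pi.smul_apply, smul_eq_mul]; ring
    rw [h6] at h4
    exact h4
  obtain ⟨hl, hr⟩ := h1 hx η
  have hA : η ⬝ᵥ η ≤ Q * K := by
    have h' : (η ⬝ᵥ η) / K ≤ Q := by
      rw [div_eq_inv_mul, ← one_div]; exact hl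
    exact (div_le_iff₀ hK0).mp h'
  constructor
  · rw [show d⁻¹ * Q = Q / d from by ring, le_div_iff₀ hd,
      show 1/(K*K') * (ξ ⬝ᵥ ξ) * d = ((ξ ⬝ᵥ ξ) * d) / (K * K') from by ring,
      div_le_iff₀ (by positivity : (0:ℝ) < K * K')]
    nlinarith [hlow, mul_le_mul_of_nonneg_left hA (le_of_lt (mul_pos hK'0 hd)), hd, hη0]
  · rw [inv_mul_eq_div, div_le_iff₀ hd]
    nlinarith [hr, mul_le_mul_of_nonneg_left hup (le_of_lt hK0)]
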